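/- Let d ∈ ℕ and let ρ be the pseudohyperbolic metric on 𝔹_d. For all z, w ∈ 𝔹_d, the infimum of ℓ_ρ(γ) over all continuous curves γ : [a,b] → 𝔹_d with γ(a) = z and γ(b) = w equals the Poincaré–Bergman distance β(z,w) = artanh(ρ(z,w)) = (1/2)·log((1+ρ(z,w))/(1−ρ(z,w))). -/

import Mathlib

/-!
The Möbius automorphisms `φₐ` of the ball (`φₐ a = 0`, `φₐ ∘ φₐ = id`) preserve `ρ`, and
`ρ(z, w) = ‖φ_z w‖`. Moving a point `v` to `0` with `φ_v` gives
`ρ(z, w) ≤ (ρ(z, v) + ρ(v, w)) / (1 + ρ(z, v) ρ(v, w))`, which by the addition formula for `artanh`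
is the triangle inequality for `β = artanh ∘ ρ`.

Lower bound: a continuous curve can be partitioned into steps with `ρ ≤ ε`, and on such a step
`(1 - ε) β ≤ ρ`; chaining the triangle inequality for `β` gives `(1 - ε) β(z, w) ≤ length`.

Upper bound: along `s ↦ φ_z (s φ_z w)`, with `r = ‖φ_z w‖ = ρ(z, w)`, the points at `s ≤ t` are at
distance `ρ = (t r - s r) / (1 - s r · t r) ≤ artanh (t r) - artanh (s r)`, so every partition sum
telescopes to at most `artanh r = β(z, w)`.
-/

open Complex Metric

/-- The pseudohyperbolic metric on the unit ball of `ℂ^d`: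
`ρ(z,w) = (1 − (1−‖z‖²)(1−‖w‖²)/|1−⟨z,w⟩|²)^{1/2}`, where `⟨z,w⟩ = Σⱼ zⱼ·conj(wⱼ)`. -/
noncomputable def pseudoHyp {d : ℕ} (z w : EuclideanSpace ℂ (Fin d)) : ℝ :=
  Real.sqrt (1 - (1 - ‖z‖ ^ 2) * (1 - ‖w‖ ^ 2) / (‖(1 - (inner ℂ w z : ℂ))‖) ^ 2)

/-- The length of a curve `γ : [a,b] → X` with respect to a pseudometric `d`:
the supremum over all partitions `a = t₀ < t₁ < … < tₙ = b` of
`Σ_{i=0}^{n−1} d(γ(tᵢ), γ(tᵢ₊₁))`. -/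
noncomputable def curveLen {X : Type*} (d : X → X → ℝ) (a b : ℝ) (γ : ℝ → X) : ENNReal :=
  sSup {L : ENNReal | ∃ (n : ℕ) (t : ℕ → ℝ), t 0 = a ∧ t n = b ∧
    (∀ i, i < n → t i < t (i + 1)) ∧
    L = ∑ i ∈ Finset.range n, ENNReal.ofReal (d (γ (t i)) (γ (t (i + 1))))}

open Set

namespace Real

lemma artanh_eq_half_log_sub {x : ℝ} (hx : x ∈ Ioo (-1) 1) :
    artanh x = (log (1 + x) - log (1 - x)) / 2 := by
  rw [artanh_eq_half_log (Ioo_subset_Icc_self hx), log_div (by grind) (by grind)]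
  ring

lemma artanh_add {x y : ℝ} (hx : x ∈ Ioo (-1) 1) (hy : y ∈ Ioo (-1) 1) :
    artanh x + artanh y = artanh ((x + y) / (1 + x * y)) := by
  obtain ⟨hx₀, hx₁⟩ := hx
  obtain ⟨hy₀, hy₁⟩ := hy
  have hxy : 0 < 1 + x * y := by nlinarith
  have hxy' : (x + y) / (1 + x * y) ∈ Ioo (-1) 1 := by
    constructor
    · rw [lt_div_iff₀ hxy]; nlinarith
    · rw [div_lt_one hxy]; nlinarith
  have hplus : 1 + (x + y) / (1 + x * y) = (1 + x) * (1 + y) / (1 + x * y) := by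
    field_simp; ring
  have hminus : 1 - (x + y) / (1 + x * y) = (1 - x) * (1 - y) / (1 + x * y) := by
    field_simp; ring
  rw [artanh_eq_half_log_sub ⟨hx₀, hx₁⟩, artanh_eq_half_log_sub ⟨hy₀, hy₁⟩,
    artanh_eq_half_log_sub hxy', hplus, hminus, log_div (by nlinarith) hxy.ne',
    log_div (by nlinarith) hxy.ne', log_mul (by linarith) (by linarith),
    log_mul (by linarith) (by linarith)]
  ring

lemma artanh_sub {x y : ℝ} (hx : x ∈ Ioo (-1) 1) (hy : y ∈ Ioo (-1) 1) :
    artanh y - artanh x = artanh ((y - x) / (1 - x * y)) := by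
  have hnx : -x ∈ Ioo (-1) 1 := ⟨by linarith [hx.2], by linarith [hx.1]⟩
  have hodd : artanh (-x) = - artanh x := by
    rw [artanh_eq_half_log_sub hx, artanh_eq_half_log_sub hnx]; ring_nf
  rw [sub_eq_add_neg, ← hodd, artanh_add hy hnx]
  congr 1; ring_nf

lemma self_le_artanh {x : ℝ} (hx₀ : 0 ≤ x) (hx₁ : x < 1) : x ≤ artanh x := by
  have hsum := hasSum_log_sub_log_of_abs_lt_one (abs_lt.2 ⟨by linarith, hx₁⟩)
  have : 2 * x ≤ log (1 + x) - log (1 - x) := by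
    simpa using le_hasSum hsum 0 fun k _ => by positivity
  rw [artanh_eq_half_log_sub ⟨by linarith, hx₁⟩]
  linarith

lemma one_sub_mul_artanh_le {x : ℝ} (hx₀ : 0 ≤ x) (hx₁ : x < 1) : (1 - x) * artanh x ≤ x := by
  have hplus : log (1 + x) ≤ x := by linarith [log_le_sub_one_of_pos (show 0 < 1 + x by linarith)]
  have hminus : -log (1 - x) ≤ x / (1 - x) := by
    have := log_le_sub_one_of_pos (inv_pos.2 (show 0 < 1 - x by linarith))
    rw [log_inv] at this
    have e : (1 - x)⁻¹ - 1 = x / (1 - x) := by field_simp [show 1 - x ≠ 0 by linarith]; ring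
    linarith
  have h1x : 0 < 1 - x := by linarith
  rw [artanh_eq_half_log_sub ⟨by linarith, hx₁⟩]
  have : (1 - x) * (-log (1 - x)) ≤ x := by
    have := mul_le_mul_of_nonneg_left hminus h1x.le
    rwa [mul_div_cancel₀ _ h1x.ne'] at this
  nlinarith

lemma sub_div_one_sub_mul_le_artanh_sub {x y : ℝ} (hx : 0 ≤ x) (hxy : x ≤ y) (hy : y < 1) :
    (y - x) / (1 - x * y) ≤ artanh y - artanh x := by
  have hden : 0 < 1 - x * y := by nlinarith
  rw [artanh_sub ⟨by linarith, by linarith⟩ ⟨by linarith, hy⟩]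
  refine self_le_artanh (div_nonneg (by linarith) hden.le) ?_
  rw [div_lt_one hden]
  nlinarith

end Real

open scoped InnerProductSpace

section Mobius

variable {H : Type*} [NormedAddCommGroup H] [InnerProductSpace ℂ H]

/-- Rudin's `φₐ z = (a - Pₐ z - sₐ Qₐ z) / (1 - ⟨z, a⟩)`, with `sₐ = √(1 - ‖a‖²)`, `Pₐ` the
projection onto `ℂ a` and `Qₐ = 1 - Pₐ`; the paper's `⟨z, a⟩` is `⟪a, z⟫_ℂ`. The coefficient
`(1 - sₐ) / ‖a‖²` of `⟨z, a⟩ a` is written as `1 / (1 + sₐ)`, which needs no case `a = 0`. -/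
noncomputable def mobius (a z : H) : H :=
  (1 - ⟪a, z⟫_ℂ)⁻¹ • ((1 - ⟪a, z⟫_ℂ / (1 + (√(1 - ‖a‖ ^ 2) : ℂ))) • a - (√(1 - ‖a‖ ^ 2) : ℂ) • z)

lemma norm_inner_lt_one {z w : H} (hz : ‖z‖ < 1) (hw : ‖w‖ < 1) : ‖⟪z, w⟫_ℂ‖ < 1 :=
  (norm_inner_le_norm z w).trans_lt (by nlinarith [norm_nonneg z, norm_nonneg w])

lemma one_sub_inner_ne_zero {z w : H} (hz : ‖z‖ < 1) (hw : ‖w‖ < 1) : 1 - ⟪z, w⟫_ℂ ≠ 0 := by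
  intro h
  have := norm_inner_lt_one hz hw
  rw [← sub_eq_zero.1 h, norm_one] at this
  exact lt_irrefl _ this

lemma inner_self_eq_one_sub_sq_sqrt {a : H} (ha : ‖a‖ ≤ 1) :
    ⟪a, a⟫_ℂ = 1 - (√(1 - ‖a‖ ^ 2) : ℂ) ^ 2 := by
  rw [← Complex.ofReal_pow, Real.sq_sqrt (by nlinarith [norm_nonneg a])]
  simp

lemma one_add_ofReal_sqrt_ne_zero (r : ℝ) : 1 + (√r : ℂ) ≠ 0 := by
  exact_mod_cast (by positivity : (0 : ℝ) < 1 + √r).ne'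

lemma mobius_zero_right (a : H) : mobius a 0 = a := by
  simp [mobius]

lemma mobius_self {a : H} (ha : ‖a‖ ≤ 1) : mobius a a = 0 := by
  have h1 := one_add_ofReal_sqrt_ne_zero (1 - ‖a‖ ^ 2)
  simp only [mobius]
  rw [← sub_smul, show 1 - ⟪a, a⟫_ℂ / (1 + (√(1 - ‖a‖ ^ 2) : ℂ)) - (√(1 - ‖a‖ ^ 2) : ℂ) = 0 by
    rw [inner_self_eq_one_sub_sq_sqrt ha]; field_simp; ring]
  simp

lemma one_sub_inner_mobius {a : H} (ha : ‖a‖ < 1) {z w : H} (hz : ‖z‖ < 1) (hw : ‖w‖ < 1) :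
    1 - ⟪mobius a z, mobius a w⟫_ℂ
      = (1 - ⟪a, a⟫_ℂ) * (1 - ⟪z, w⟫_ℂ) / ((1 - ⟪z, a⟫_ℂ) * (1 - ⟪a, w⟫_ℂ)) := by
  have h1 := one_add_ofReal_sqrt_ne_zero (1 - ‖a‖ ^ 2)
  have hza := one_sub_inner_ne_zero hz ha
  have haw := one_sub_inner_ne_zero ha hw
  simp only [mobius, inner_smul_left, inner_smul_right, inner_sub_left, inner_sub_right,
    map_sub, map_one, map_inv₀, map_div₀, map_add, Complex.conj_ofReal, inner_conj_symm]
  rw [inner_self_eq_one_sub_sq_sqrt ha.le]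
  field_simp
  ring

lemma inner_mobius {a : H} (ha : ‖a‖ ≤ 1) (z : H) :
    ⟪a, mobius a z⟫_ℂ = (⟪a, a⟫_ℂ - ⟪a, z⟫_ℂ) / (1 - ⟪a, z⟫_ℂ) := by
  have h1 := one_add_ofReal_sqrt_ne_zero (1 - ‖a‖ ^ 2)
  simp only [mobius, inner_smul_right, inner_sub_right]
  rw [inner_self_eq_one_sub_sq_sqrt ha]
  field_simp
  ring

lemma mobius_mobius {a : H} (ha : ‖a‖ < 1) {z : H} (hz : ‖z‖ < 1) :
    mobius a (mobius a z) = z := by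
  have h1 := one_add_ofReal_sqrt_ne_zero (1 - ‖a‖ ^ 2)
  have haz := one_sub_inner_ne_zero ha hz
  have hs0 : (√(1 - ‖a‖ ^ 2) : ℂ) ≠ 0 := by
    have : 0 < 1 - ‖a‖ ^ 2 := by nlinarith [norm_nonneg a]
    exact_mod_cast (Real.sqrt_pos.2 this).ne'
  rw [mobius, inner_mobius ha.le z]
  simp only [mobius]
  rw [inner_self_eq_one_sub_sq_sqrt ha.le]
  match_scalars <;> field_simp <;> ring

lemma one_sub_inner_self (x : H) : 1 - ⟪x, x⟫_ℂ = ((1 - ‖x‖ ^ 2 : ℝ) : ℂ) := by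
  simp

lemma norm_one_sub_inner_comm (z w : H) : ‖1 - ⟪z, w⟫_ℂ‖ = ‖1 - ⟪w, z⟫_ℂ‖ := by
  rw [← inner_conj_symm, ← Complex.norm_conj, map_sub, map_one, Complex.conj_conj]

lemma one_sub_norm_sq_mobius {a : H} (ha : ‖a‖ < 1) {z : H} (hz : ‖z‖ < 1) :
    1 - ‖mobius a z‖ ^ 2 = (1 - ‖a‖ ^ 2) * (1 - ‖z‖ ^ 2) / ‖1 - ⟪a, z⟫_ℂ‖ ^ 2 := by
  have h := one_sub_inner_mobius ha hz hz
  have hden : (1 - ⟪z, a⟫_ℂ) * (1 - ⟪a, z⟫_ℂ) = ((‖1 - ⟪a, z⟫_ℂ‖ ^ 2 : ℝ) : ℂ) := by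
    rw [← inner_conj_symm z a, Complex.ofReal_pow, ← Complex.conj_mul', map_sub, map_one]
  rw [one_sub_inner_self, one_sub_inner_self, one_sub_inner_self, hden] at h
  exact_mod_cast h

lemma norm_mobius_lt_one {a : H} (ha : ‖a‖ < 1) {z : H} (hz : ‖z‖ < 1) : ‖mobius a z‖ < 1 := by
  have h := one_sub_norm_sq_mobius ha hz
  have : 0 < (1 - ‖a‖ ^ 2) * (1 - ‖z‖ ^ 2) / ‖1 - ⟪a, z⟫_ℂ‖ ^ 2 := by
    have := one_sub_inner_ne_zero ha hz
    apply div_pos (mul_pos _ _) (by positivity) <;> nlinarith [norm_nonneg a, norm_nonneg z]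
  nlinarith [norm_nonneg (mobius a z)]

lemma norm_one_sub_inner_mobius {a : H} (ha : ‖a‖ < 1) {z w : H} (hz : ‖z‖ < 1) (hw : ‖w‖ < 1) :
    ‖1 - ⟪mobius a z, mobius a w⟫_ℂ‖
      = (1 - ‖a‖ ^ 2) * ‖1 - ⟪z, w⟫_ℂ‖ / (‖1 - ⟪a, z⟫_ℂ‖ * ‖1 - ⟪a, w⟫_ℂ‖) := by
  rw [one_sub_inner_mobius ha hz hw, norm_div, norm_mul, norm_mul, one_sub_inner_self,
    Complex.norm_real, Real.norm_of_nonneg (by nlinarith [norm_nonneg a]),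
    norm_one_sub_inner_comm z a]

lemma continuousOn_mobius {a : H} (ha : ‖a‖ < 1) : ContinuousOn (mobius a) (ball 0 1) := by
  unfold mobius
  have : ∀ z ∈ ball (0 : H) 1, 1 - ⟪a, z⟫_ℂ ≠ 0 := fun z hz =>
    one_sub_inner_ne_zero ha (mem_ball_zero_iff.1 hz)
  fun_prop (disch := assumption)

noncomputable def geodesic (z w : H) (s : ℝ) : H := mobius z ((s : ℂ) • mobius z w)

lemma geodesic_zero (z w : H) : geodesic z w 0 = z := by
  simp [geodesic, mobius_zero_right]

lemma geodesic_one {z w : H} (hz : ‖z‖ < 1) (hw : ‖w‖ < 1) : geodesic z w 1 = w := by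
  simp [geodesic, mobius_mobius hz hw]

lemma norm_smul_mobius_lt_one {z w : H} (hz : ‖z‖ < 1) (hw : ‖w‖ < 1) {s : ℝ} (hs : s ∈ Icc 0 1) :
    ‖(s : ℂ) • mobius z w‖ < 1 := by
  rw [norm_smul, Complex.norm_real, Real.norm_of_nonneg hs.1]
  nlinarith [hs.2, norm_mobius_lt_one hz hw, norm_nonneg (mobius z w)]

lemma norm_geodesic_lt_one {z w : H} (hz : ‖z‖ < 1) (hw : ‖w‖ < 1) {s : ℝ} (hs : s ∈ Icc 0 1) :
    ‖geodesic z w s‖ < 1 :=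
  norm_mobius_lt_one hz (norm_smul_mobius_lt_one hz hw hs)

lemma continuousOn_geodesic {z w : H} (hz : ‖z‖ < 1) (hw : ‖w‖ < 1) :
    ContinuousOn (geodesic z w) (Icc 0 1) :=
  (continuousOn_mobius hz).comp (by fun_prop) fun _ hs =>
    mem_ball_zero_iff.2 (norm_smul_mobius_lt_one hz hw hs)

end Mobius

section CurveLength

variable {X : Type*}

lemma mem_Icc_of_partition {t : ℕ → ℝ} {n : ℕ} (ht : ∀ i < n, t i < t (i + 1)) {i : ℕ}
    (hi : i ≤ n) : t i ∈ Icc (t 0) (t n) := by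
  have hmono := (strictMonoOn_Iic_of_lt_succ (ψ := t) (n := n) fun m hm => ht m hm).monotoneOn
  exact ⟨hmono (Nat.zero_le n) hi (Nat.zero_le i), hmono hi (le_refl n) hi⟩

lemma sum_le_curveLen (d : X → X → ℝ) (γ : ℝ → X) {n : ℕ} {t : ℕ → ℝ}
    (ht : ∀ i < n, t i < t (i + 1)) :
    ∑ i ∈ Finset.range n, ENNReal.ofReal (d (γ (t i)) (γ (t (i + 1))))
      ≤ curveLen d (t 0) (t n) γ :=
  le_sSup ⟨n, t, rfl, rfl, ht, rfl⟩

lemma curveLen_le_ofReal_sub {d : X → X → ℝ} {a b : ℝ} {γ : ℝ → X} {f : ℝ → ℝ}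
    (hf : MonotoneOn f (Icc a b))
    (h : ∀ s ∈ Icc a b, ∀ t ∈ Icc a b, s ≤ t → d (γ s) (γ t) ≤ f t - f s) :
    curveLen d a b γ ≤ ENNReal.ofReal (f b - f a) := by
  refine sSup_le ?_
  rintro _ ⟨n, t, rfl, rfl, ht, rfl⟩
  have hmem : ∀ i < n, t i ∈ Icc (t 0) (t n) ∧ t (i + 1) ∈ Icc (t 0) (t n) := fun i hi =>
    ⟨mem_Icc_of_partition ht hi.le, mem_Icc_of_partition ht hi⟩
  calc ∑ i ∈ Finset.range n, ENNReal.ofReal (d (γ (t i)) (γ (t (i + 1))))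
      ≤ ∑ i ∈ Finset.range n, ENNReal.ofReal (f (t (i + 1)) - f (t i)) := by
        gcongr with i hi
        obtain ⟨hi₀, hi₁⟩ := hmem i (Finset.mem_range.1 hi)
        exact h _ hi₀ _ hi₁ (ht i (Finset.mem_range.1 hi)).le
    _ = ENNReal.ofReal (f (t n) - f (t 0)) := by
        rw [← ENNReal.ofReal_sum_of_nonneg, Finset.sum_range_sub (fun i => f (t i))]
        intro i hi
        obtain ⟨hi₀, hi₁⟩ := hmem i (Finset.mem_range.1 hi)
        exact sub_nonneg.2 (hf hi₀ hi₁ (ht i (Finset.mem_range.1 hi)).le)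

lemma exists_partition_forall_le {F : ℝ → ℝ → ℝ} {a b : ℝ} (hab : a ≤ b)
    (hF : ContinuousOn (fun p : ℝ × ℝ => F p.1 p.2) (Icc a b ×ˢ Icc a b))
    (hdiag : ∀ t ∈ Icc a b, F t t = 0) {ε : ℝ} (hε : 0 < ε) :
    ∃ (n : ℕ) (t : ℕ → ℝ), t 0 = a ∧ t n = b ∧ (∀ i < n, t i < t (i + 1)) ∧
      ∀ i < n, F (t i) (t (i + 1)) ≤ ε := by
  rcases hab.eq_or_lt with rfl | hab
  · exact ⟨0, fun _ => a, rfl, rfl, by simp, by simp⟩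
  obtain ⟨η, hη, hFη⟩ := Metric.uniformContinuousOn_iff.1
    ((isCompact_Icc.prod isCompact_Icc).uniformContinuousOn_of_continuous hF) ε hε
  obtain ⟨n, hn⟩ := exists_nat_gt ((b - a) / η)
  have hn₀ : (0 : ℝ) < n := lt_trans (div_pos (by linarith) hη) hn
  set h := (b - a) / n with h_def
  have hh : 0 < h := div_pos (by linarith) hn₀
  have hhη : h < η := by rwa [h_def, div_lt_iff₀ hn₀, mul_comm, ← div_lt_iff₀ hη]
  have ht : ∀ i < n, a + i * h < a + (i + 1 : ℕ) * h := fun i _ => by push_cast; linarith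
  have htn : a + n * h = b := by rw [h_def]; field_simp; ring
  refine ⟨n, fun i => a + i * h, by simp, htn, ht, fun i hi => ?_⟩
  have hmem : ∀ j ≤ n, a + j * h ∈ Icc a b := fun j hj => by
    simpa [htn] using mem_Icc_of_partition ht hj
  have hi₀ := hmem i hi.le
  have hclose := hFη (_, _) ⟨hi₀, hmem (i + 1) hi⟩ (_, _) ⟨hi₀, hi₀⟩ (by
    rw [Prod.dist_eq, dist_self, Real.dist_eq, max_eq_right (abs_nonneg _)]
    push_cast
    rwa [add_sub_add_left_eq_sub, ← sub_mul, add_sub_cancel_left, one_mul, abs_of_pos hh])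
  simp only [hdiag _ hi₀, Real.dist_eq, sub_zero] at hclose
  exact (le_abs_self _).trans hclose.le

end CurveLength

section Ball

variable {d : ℕ}

local notation "E" => EuclideanSpace ℂ (Fin d)

lemma pseudoHyp_eq_norm_mobius {z w : E} (hz : ‖z‖ < 1) (hw : ‖w‖ < 1) :
    pseudoHyp z w = ‖mobius z w‖ := by
  rw [pseudoHyp, norm_one_sub_inner_comm, ← one_sub_norm_sq_mobius hz hw, sub_sub_cancel,
    Real.sqrt_sq (norm_nonneg _)]

lemma pseudoHyp_nonneg (z w : E) : 0 ≤ pseudoHyp z w := Real.sqrt_nonneg _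

lemma pseudoHyp_comm (z w : E) : pseudoHyp z w = pseudoHyp w z := by
  rw [pseudoHyp, pseudoHyp, norm_one_sub_inner_comm, mul_comm (1 - ‖z‖ ^ 2)]

lemma pseudoHyp_lt_one {z w : E} (hz : ‖z‖ < 1) (hw : ‖w‖ < 1) : pseudoHyp z w < 1 := by
  rw [pseudoHyp_eq_norm_mobius hz hw]
  exact norm_mobius_lt_one hz hw

lemma pseudoHyp_self {z : E} (hz : ‖z‖ < 1) : pseudoHyp z z = 0 := by
  rw [pseudoHyp_eq_norm_mobius hz hz, mobius_self hz.le, norm_zero]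

lemma pseudoHyp_mobius {a : E} (ha : ‖a‖ < 1) {z w : E} (hz : ‖z‖ < 1) (hw : ‖w‖ < 1) :
    pseudoHyp (mobius a z) (mobius a w) = pseudoHyp z w := by
  have hz' := one_sub_inner_ne_zero ha hz
  have hw' := one_sub_inner_ne_zero ha hw
  have ha' : 1 - ‖a‖ ^ 2 ≠ 0 := by nlinarith [norm_nonneg a]
  rw [pseudoHyp, pseudoHyp, one_sub_norm_sq_mobius ha hz, one_sub_norm_sq_mobius ha hw,
    norm_one_sub_inner_mobius ha hw hz]
  field_simp

lemma pseudoHyp_le_add_div {z w : E} (hz : ‖z‖ < 1) (hw : ‖w‖ < 1) :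
    pseudoHyp z w ≤ (‖z‖ + ‖w‖) / (1 + ‖z‖ * ‖w‖) := by
  have hden : ‖1 - ⟪w, z⟫_ℂ‖ ≤ 1 + ‖z‖ * ‖w‖ := by
    calc ‖1 - ⟪w, z⟫_ℂ‖ ≤ ‖(1 : ℂ)‖ + ‖⟪w, z⟫_ℂ‖ := norm_sub_le _ _
      _ ≤ 1 + ‖z‖ * ‖w‖ := by rw [norm_one, mul_comm]; gcongr; exact norm_inner_le_norm w z
  have hpos := norm_pos_iff.2 (one_sub_inner_ne_zero hw hz)
  have hsq : ((‖z‖ + ‖w‖) / (1 + ‖z‖ * ‖w‖)) ^ 2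
      = 1 - (1 - ‖z‖ ^ 2) * (1 - ‖w‖ ^ 2) / (1 + ‖z‖ * ‖w‖) ^ 2 := by
    field_simp; ring
  rw [pseudoHyp, Real.sqrt_le_left (by positivity), hsq]
  have hnum : 0 ≤ (1 - ‖z‖ ^ 2) * (1 - ‖w‖ ^ 2) :=
    mul_nonneg (by nlinarith [norm_nonneg z]) (by nlinarith [norm_nonneg w])
  gcongr 1 - ?_
  exact div_le_div_of_nonneg_left hnum (by positivity) (pow_le_pow_left₀ hpos.le hden 2)

lemma pseudoHyp_smul_smul (u : E) {s t : ℝ} (hst : s ≤ t) (h : s * ‖u‖ * (t * ‖u‖) < 1) :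
    pseudoHyp ((s : ℂ) • u) ((t : ℂ) • u) = (t * ‖u‖ - s * ‖u‖) / (1 - s * ‖u‖ * (t * ‖u‖)) := by
  have hinner : ⟪(t : ℂ) • u, (s : ℂ) • u⟫_ℂ = ((s * ‖u‖ * (t * ‖u‖) : ℝ) : ℂ) := by
    rw [inner_smul_left, inner_smul_right, Complex.conj_ofReal]
    simp only [inner_self_eq_norm_sq_to_K, coe_algebraMap, ofReal_mul]
    ring
  have hden : 0 < 1 - s * ‖u‖ * (t * ‖u‖) := by linarith
  rw [pseudoHyp, hinner, ← Complex.ofReal_one, ← Complex.ofReal_sub, Complex.norm_real,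
    Real.norm_of_nonneg hden.le, norm_smul, norm_smul, Complex.norm_real, Complex.norm_real,
    Real.norm_eq_abs, Real.norm_eq_abs, mul_pow, mul_pow, sq_abs, sq_abs]
  have hD := pow_ne_zero 2 hden.ne'
  rw [show 1 - (1 - s ^ 2 * ‖u‖ ^ 2) * (1 - t ^ 2 * ‖u‖ ^ 2) / (1 - s * ‖u‖ * (t * ‖u‖)) ^ 2
      = ((t * ‖u‖ - s * ‖u‖) / (1 - s * ‖u‖ * (t * ‖u‖))) ^ 2 by
    rw [div_pow, eq_div_iff hD, sub_mul, div_mul_cancel₀ _ hD]; ring]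
  exact Real.sqrt_sq (div_nonneg (by nlinarith [norm_nonneg u]) hden.le)

lemma continuousOn_pseudoHyp :
    ContinuousOn (fun p : E × E => pseudoHyp p.1 p.2) (ball 0 1 ×ˢ ball 0 1) := by
  have : ∀ p ∈ (ball (0 : E) 1 ×ˢ ball (0 : E) 1), ‖1 - ⟪p.2, p.1⟫_ℂ‖ ^ 2 ≠ 0 :=
    fun p hp => pow_ne_zero 2 (norm_ne_zero_iff.2 (one_sub_inner_ne_zero
      (mem_ball_zero_iff.1 hp.2) (mem_ball_zero_iff.1 hp.1)))
  unfold pseudoHyp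
  fun_prop (disch := assumption)

noncomputable def bergmanDist (z w : E) : ℝ := Real.artanh (pseudoHyp z w)

lemma bergmanDist_self {z : E} (hz : ‖z‖ < 1) : bergmanDist z z = 0 := by
  rw [bergmanDist, pseudoHyp_self hz, Real.artanh_zero]

lemma bergmanDist_triangle {z v w : E} (hz : ‖z‖ < 1) (hv : ‖v‖ < 1) (hw : ‖w‖ < 1) :
    bergmanDist z w ≤ bergmanDist z v + bergmanDist v w := by
  set p := ‖mobius v z‖
  set q := ‖mobius v w‖
  have hp : p < 1 := norm_mobius_lt_one hv hz
  have hq : q < 1 := norm_mobius_lt_one hv hw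
  have hp₀ : 0 ≤ p := norm_nonneg _
  have hq₀ : 0 ≤ q := norm_nonneg _
  have hzv : pseudoHyp z v = p := by rw [pseudoHyp_comm, pseudoHyp_eq_norm_mobius hv hz]
  have hvw : pseudoHyp v w = q := pseudoHyp_eq_norm_mobius hv hw
  rw [bergmanDist, bergmanDist, bergmanDist, hzv, hvw,
    Real.artanh_add ⟨by linarith, hp⟩ ⟨by linarith, hq⟩, ← pseudoHyp_mobius hv hz hw]
  refine Real.artanh_le_artanh (by linarith [pseudoHyp_nonneg (mobius v z) (mobius v w)]) ?_
    (pseudoHyp_le_add_div hp hq)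
  rw [div_lt_one (by positivity)]
  nlinarith

lemma bergmanDist_le_sum {x : ℕ → E} {n : ℕ} (hx : ∀ i ≤ n, ‖x i‖ < 1) :
    bergmanDist (x 0) (x n) ≤ ∑ i ∈ Finset.range n, bergmanDist (x i) (x (i + 1)) := by
  induction n with
  | zero => simp [bergmanDist_self (hx 0 le_rfl)]
  | succ n ih =>
    rw [Finset.sum_range_succ]
    linarith [ih fun i hi => hx i (by omega),
      bergmanDist_triangle (hx 0 (by omega)) (hx n (by omega)) (hx (n + 1) le_rfl)]

lemma mul_bergmanDist_le_pseudoHyp {z w : E} (hz : ‖z‖ < 1) (hw : ‖w‖ < 1) {c : ℝ}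
    (hc : c ≤ 1 - pseudoHyp z w) : c * bergmanDist z w ≤ pseudoHyp z w :=
  calc c * bergmanDist z w ≤ (1 - pseudoHyp z w) * bergmanDist z w :=
        mul_le_mul_of_nonneg_right hc (Real.artanh_nonneg (pseudoHyp_nonneg z w))
    _ ≤ pseudoHyp z w := Real.one_sub_mul_artanh_le (pseudoHyp_nonneg z w) (pseudoHyp_lt_one hz hw)

lemma curveLen_geodesic_le {z w : E} (hz : ‖z‖ < 1) (hw : ‖w‖ < 1) :
    curveLen pseudoHyp 0 1 (geodesic z w) ≤ ENNReal.ofReal (bergmanDist z w) := by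
  set r := ‖mobius z w‖
  have hr₀ : 0 ≤ r := norm_nonneg _
  have hr : r < 1 := norm_mobius_lt_one hz hw
  have hmem : ∀ s ∈ Icc (0 : ℝ) 1, s * r ∈ Ioo (-1) 1 := fun s hs =>
    ⟨by nlinarith [hs.1], by nlinarith [hs.2]⟩
  have hend : Real.artanh (1 * r) - Real.artanh (0 * r) = bergmanDist z w := by
    rw [one_mul, zero_mul, Real.artanh_zero, sub_zero, bergmanDist, pseudoHyp_eq_norm_mobius hz hw]
  rw [← hend]
  refine curveLen_le_ofReal_sub (fun s hs t ht hst => Real.artanh_le_artanh (hmem s hs).1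
    (hmem t ht).2 (by gcongr)) fun s hs t ht hst => ?_
  have hx₀ : 0 ≤ s * r := mul_nonneg hs.1 hr₀
  have hxy : s * r ≤ t * r := by gcongr
  have hy : t * r < 1 := (hmem t ht).2
  rw [geodesic, geodesic, pseudoHyp_mobius hz (norm_smul_mobius_lt_one hz hw hs)
    (norm_smul_mobius_lt_one hz hw ht), pseudoHyp_smul_smul _ hst (by nlinarith)]
  exact Real.sub_div_one_sub_mul_le_artanh_sub hx₀ hxy hy

lemma bergmanDist_le_curveLen {a b : ℝ} {γ : ℝ → E} (hab : a ≤ b)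
    (hγ : ContinuousOn γ (Icc a b)) (hball : ∀ t ∈ Icc a b, ‖γ t‖ < 1) :
    ENNReal.ofReal (bergmanDist (γ a) (γ b)) ≤ curveLen pseudoHyp a b γ := by
  refine ENNReal.le_of_forall_lt_one_mul_le fun c hc => ?_
  have hc' : c.toReal < 1 := by
    simpa using (ENNReal.toReal_lt_toReal hc.ne_top ENNReal.one_ne_top).2 hc
  have hmaps : MapsTo (Prod.map γ γ) (Icc a b ×ˢ Icc a b) (ball 0 1 ×ˢ ball 0 1) :=
    fun p hp => ⟨mem_ball_zero_iff.2 (hball _ hp.1), mem_ball_zero_iff.2 (hball _ hp.2)⟩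
  have hF : ContinuousOn (fun p : ℝ × ℝ => pseudoHyp (γ p.1) (γ p.2)) (Icc a b ×ˢ Icc a b) :=
    (continuousOn_pseudoHyp.comp (hγ.prodMap hγ) hmaps :)
  obtain ⟨n, t, rfl, rfl, ht, hfine⟩ := exists_partition_forall_le
    (F := fun s t => pseudoHyp (γ s) (γ t)) hab hF (fun s hs => pseudoHyp_self (hball s hs))
    (sub_pos.2 hc')
  have hγt : ∀ i ≤ n, ‖γ (t i)‖ < 1 := fun i hi => hball _ (mem_Icc_of_partition ht hi)
  calc c * ENNReal.ofReal (bergmanDist (γ (t 0)) (γ (t n)))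
      = ENNReal.ofReal (c.toReal * bergmanDist (γ (t 0)) (γ (t n))) := by
        rw [ENNReal.ofReal_mul ENNReal.toReal_nonneg, ENNReal.ofReal_toReal hc.ne_top]
    _ ≤ ENNReal.ofReal (∑ i ∈ Finset.range n, pseudoHyp (γ (t i)) (γ (t (i + 1)))) := by
        refine ENNReal.ofReal_le_ofReal ?_
        calc c.toReal * bergmanDist (γ (t 0)) (γ (t n))
            ≤ ∑ i ∈ Finset.range n, c.toReal * bergmanDist (γ (t i)) (γ (t (i + 1))) := by
              rw [← Finset.mul_sum]
              exact mul_le_mul_of_nonneg_left (bergmanDist_le_sum (x := fun i => γ (t i)) hγt)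
                ENNReal.toReal_nonneg
          _ ≤ _ := Finset.sum_le_sum fun i hi => by
              have hi := Finset.mem_range.1 hi
              exact mul_bergmanDist_le_pseudoHyp (hγt i hi.le) (hγt (i + 1) hi)
                (by linarith [hfine i hi])
    _ = ∑ i ∈ Finset.range n, ENNReal.ofReal (pseudoHyp (γ (t i)) (γ (t (i + 1)))) :=
        ENNReal.ofReal_sum_of_nonneg fun i _ => pseudoHyp_nonneg _ _
    _ ≤ curveLen pseudoHyp (t 0) (t n) γ := sum_le_curveLen pseudoHyp γ ht

end Ball

/-- For `z, w ∈ 𝔹_d`, the infimum of the pseudohyperbolic lengths of continuous curves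
in `𝔹_d` joining `z` to `w` equals the Poincaré–Bergman distance
`β(z,w) = artanh(ρ(z,w)) = (1/2)·log((1+ρ(z,w))/(1−ρ(z,w)))`. -/
theorem inner_length_eq_bergman (d : ℕ) (z w : EuclideanSpace ℂ (Fin d))
    (hz : ‖z‖ < 1) (hw : ‖w‖ < 1) :
    sInf {L : ENNReal | ∃ (a b : ℝ) (γ : ℝ → EuclideanSpace ℂ (Fin d)), a ≤ b ∧
        ContinuousOn γ (Set.Icc a b) ∧ (∀ t ∈ Set.Icc a b, ‖γ t‖ < 1) ∧
        γ a = z ∧ γ b = w ∧ L = curveLen pseudoHyp a b γ} =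
      ENNReal.ofReal
        ((1 / 2) * Real.log ((1 + pseudoHyp z w) / (1 - pseudoHyp z w))) := by
  rw [← Real.artanh_eq_half_log ⟨by linarith [pseudoHyp_nonneg z w], (pseudoHyp_lt_one hz hw).le⟩]
  refine le_antisymm ?_ ?_
  · exact sInf_le_of_le ⟨0, 1, geodesic z w, zero_le_one, continuousOn_geodesic hz hw,
      fun s hs => norm_geodesic_lt_one hz hw hs, geodesic_zero z w, geodesic_one hz hw, rfl⟩
      (curveLen_geodesic_le hz hw)
  · refine le_sInf ?_
    rintro _ ⟨a, b, γ, hab, hγ, hball, rfl, rfl, rfl⟩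
    exact bergmanDist_le_curveLen hab hγ hball
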